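/- Let 1 ≤ p < ∞ and 0 < s < 1, and let u : X → ℝ be a Lipschitz function. For every k ∈ ℤ define u_k : X → [0,1] by u_k(x) = 1 if |u(x)| ≥ 2^{k+1}, u_k(x) = |u(x)|/2^k − 1 if 2^k < |u(x)| < 2^{k+1}, and u_k(x) = 0 if |u(x)| ≤ 2^k. Then there exists a constant C depending only on p (one may take C = 2^{p+2}/(1 − 2^{−p})) such that for every z ∈ X and R > 0: Σ_{k∈ℤ} 2^{kp} ∫_{B(z,R)} ∫_{B(z,R)} |u_k(x)−u_k(y)|^p / (d(x,y)^{sp} μ(B(x,d(x,y)))) dμ(y) dμ(x) ≤ C ∫_{B(z,R)} ∫_{B(z,R)} |u(x)−u(y)|^p / (d(x,y)^{sp} μ(B(x,d(x,y)))) dμ(y) dμ(x). -/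

import Mathlib

open Metric MeasureTheory Set
open scoped ENNReal NNReal

/-- The effective diameter bound: `diam E`, unless `diam E = 0`, in which case `diam X`. -/
noncomputable def diamBound {X : Type*} [PseudoEMetricSpace X] (E : Set X) : ℝ≥0∞ :=
  haveI := Classical.propDecidable
  if EMetric.diam E = 0 then EMetric.diam (Set.univ : Set X) else EMetric.diam E

/-- The fractional `(s,p)`-Gagliardo kernel `|u x - u y|^p / (d(x,y)^{sp} μ(B(x,d(x,y))))`. -/
noncomputable def fracKernel {X : Type*} [MetricSpace X] [MeasurableSpace X]
    (μ : Measure X) (s p : ℝ) (u : X → ℝ) (x y : X) : ℝ≥0∞ :=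
  ENNReal.ofReal (|u x - u y| ^ p) /
    (ENNReal.ofReal (dist x y ^ (s * p)) * μ (ball x (dist x y)))

/-- The Maz'ya-type truncation `u_k` of a function `u` at level `k ∈ ℤ`:
`u_k = 1` where `|u| ≥ 2^{k+1}`, `u_k = |u|/2^k - 1` where `2^k < |u| < 2^{k+1}`,
and `u_k = 0` where `|u| ≤ 2^k`. -/
noncomputable def truncLevel {X : Type*} (u : X → ℝ) (k : ℤ) (x : X) : ℝ :=
  if (2 : ℝ) ^ (k + 1) ≤ |u x| then 1
  else if |u x| ≤ (2 : ℝ) ^ k then 0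
  else |u x| / 2 ^ k - 1

/-!
Each truncation `u_k` is the clamp of `|u| / 2^k - 1` to `[0, 1]`, hence
`|u_k x - u_k y| ≤ min 1 (|u x - u y| / 2^k)`. Write `δ = |u x - u y|`. The levels `2^k ≤ δ`
contribute at most the geometric sum `∑_{2^k ≤ δ} 2^{kp} ≤ δ^p / (1 - 2^{-p})`. A level with
`δ < 2^k` contributes at most `δ^p`, and only if `2^k < max(|u x|, |u y|) < 2^{k+2}`, which leaves
two such levels. This pointwise bound, divided by the kernel's denominator and integrated twice,
gives the theorem with `C = (1 - 2^{-p})⁻¹ + 2`.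
-/

section Truncation

variable {X : Type*} (u : X → ℝ) (k : ℤ) (x y : X)

lemma truncLevel_eq_min_max : truncLevel u k x = min (max (|u x| / 2 ^ k - 1) 0) 1 := by
  have h2k : (0 : ℝ) < 2 ^ k := zpow_pos two_pos k
  have hk1 : (2 : ℝ) ^ (k + 1) = 2 * 2 ^ k := by rw [zpow_add_one₀ two_ne_zero, mul_comm]
  unfold truncLevel
  rw [hk1]
  split_ifs with h1 h2
  · refine (min_eq_right (le_max_of_le_left ?_)).symm
    rw [le_sub_iff_add_le, le_div_iff₀ h2k]
    linarith
  · rw [max_eq_right (by rwa [sub_nonpos, div_le_one h2k]), min_eq_left zero_le_one]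
  · rw [not_le] at h1 h2
    rw [max_eq_left (by rw [sub_nonneg, le_div_iff₀ h2k]; linarith),
      min_eq_left (by rw [sub_le_iff_le_add, div_le_iff₀ h2k]; linarith)]

lemma truncLevel_mem_Icc : truncLevel u k x ∈ Icc (0 : ℝ) 1 := by
  rw [truncLevel_eq_min_max]
  exact ⟨le_min (le_max_right _ _) zero_le_one, min_le_right _ _⟩

lemma abs_truncLevel_sub_le_one : |truncLevel u k x - truncLevel u k y| ≤ 1 := by
  obtain ⟨hx0, hx1⟩ := truncLevel_mem_Icc u k x
  obtain ⟨hy0, hy1⟩ := truncLevel_mem_Icc u k y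
  exact abs_sub_le_iff.2 ⟨by linarith, by linarith⟩

lemma abs_truncLevel_sub_le :
    |truncLevel u k x - truncLevel u k y| ≤ |u x - u y| / 2 ^ k := by
  have h2k : (0 : ℝ) < 2 ^ k := zpow_pos two_pos k
  rw [truncLevel_eq_min_max, truncLevel_eq_min_max]
  calc _ ≤ max |max (|u x| / 2 ^ k - 1) 0 - max (|u y| / 2 ^ k - 1) 0| |(1 : ℝ) - 1| :=
        abs_min_sub_min_le_max _ _ _ _
    _ = |max (|u x| / 2 ^ k - 1) 0 - max (|u y| / 2 ^ k - 1) 0| := by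
        rw [sub_self, abs_zero, max_eq_left (abs_nonneg _)]
    _ ≤ |(|u x| / 2 ^ k - 1) - (|u y| / 2 ^ k - 1)| := abs_max_sub_max_le_abs _ _ _
    _ = |(|u x| - |u y|)| / 2 ^ k := by
        rw [sub_sub_sub_cancel_right, ← sub_div, abs_div, abs_of_pos h2k]
    _ ≤ |u x - u y| / 2 ^ k := div_le_div_of_nonneg_right (abs_abs_sub_abs_le_abs_sub _ _) h2k.le

lemma ofReal_two_rpow_mul_truncLevel_sub_le {p : ℝ} (hp : 0 ≤ p) :
    ENNReal.ofReal ((2 : ℝ) ^ ((k : ℝ) * p)) *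
        ENNReal.ofReal (|truncLevel u k x - truncLevel u k y| ^ p) ≤
      ENNReal.ofReal (|u x - u y| ^ p) := by
  have h2k : (0 : ℝ) < 2 ^ k := zpow_pos two_pos k
  rw [← ENNReal.ofReal_mul (by positivity)]
  refine ENNReal.ofReal_le_ofReal ?_
  calc (2 : ℝ) ^ ((k : ℝ) * p) * |truncLevel u k x - truncLevel u k y| ^ p
      ≤ ((2 : ℝ) ^ k) ^ p * (|u x - u y| / 2 ^ k) ^ p := by
        rw [Real.rpow_mul zero_le_two, Real.rpow_intCast]
        gcongr
        exact abs_truncLevel_sub_le u k x y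
    _ = |u x - u y| ^ p := by
        rw [← Real.mul_rpow h2k.le (div_nonneg (abs_nonneg _) h2k.le), mul_div_cancel₀ _ h2k.ne']

lemma truncLevel_of_le {k : ℤ} {x : X} (h : |u x| ≤ 2 ^ k) : truncLevel u k x = 0 := by
  have : ¬ (2 : ℝ) ^ (k + 1) ≤ |u x| := fun h' =>
    (zpow_lt_zpow_right₀ one_lt_two (lt_add_one k)).not_ge (h'.trans h)
  rw [truncLevel, if_neg this, if_pos h]

lemma truncLevel_of_ge {k : ℤ} {x : X} (h : 2 ^ (k + 1) ≤ |u x|) : truncLevel u k x = 1 := by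
  rw [truncLevel, if_pos h]

lemma eq_log_sub_one_or_eq_log_of_truncLevel_ne {k : ℤ} {x y : X}
    (hne : truncLevel u k x ≠ truncLevel u k y) (hk : |u x - u y| < 2 ^ k) :
    k = Int.log 2 (max |u x| |u y|) - 1 ∨ k = Int.log 2 (max |u x| |u y|) := by
  have h2k : (0 : ℝ) < 2 ^ k := zpow_pos two_pos k
  have hk1 : (2 : ℝ) ^ (k + 1) = 2 * 2 ^ k := by rw [zpow_add_one₀ two_ne_zero, mul_comm]
  have hk2 : (2 : ℝ) ^ (k + 2) = 4 * 2 ^ k := by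
    rw [zpow_add₀ two_ne_zero]; norm_num [mul_comm]
  have hkM : 2 ^ k < max |u x| |u y| := by
    by_contra! h
    exact hne (by rw [truncLevel_of_le u ((le_max_left _ _).trans h),
      truncLevel_of_le u ((le_max_right _ _).trans h)])
  have hmin : min |u x| |u y| < 2 ^ (k + 1) := by
    by_contra! h
    exact hne (by rw [truncLevel_of_ge u (h.trans (min_le_left _ _)),
      truncLevel_of_ge u (h.trans (min_le_right _ _))])
  have hMpos : 0 < max |u x| |u y| := h2k.trans hkM
  have hMk : max |u x| |u y| < 2 ^ (k + 2) := by
    have := max_sub_min_eq_abs' |u x| |u y|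
    have := abs_abs_sub_abs_le_abs_sub (u x) (u y)
    linarith
  have hle : k ≤ Int.log 2 (max |u x| |u y|) :=
    (Int.zpow_le_iff_le_log one_lt_two hMpos).1 (mod_cast hkM.le)
  have hlt : Int.log 2 (max |u x| |u y|) < k + 2 :=
    (Int.lt_zpow_iff_log_lt one_lt_two hMpos).1 (mod_cast hMk)
  omega

lemma ofReal_two_rpow_mul_truncLevel_sub_le_indicator_add {p : ℝ} (hp : 0 < p)
    (hδ : 0 < |u x - u y|) :
    ENNReal.ofReal ((2 : ℝ) ^ ((k : ℝ) * p)) *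
        ENNReal.ofReal (|truncLevel u k x - truncLevel u k y| ^ p) ≤
      (Iic (Int.log 2 |u x - u y|)).indicator
          (fun k : ℤ => ENNReal.ofReal ((2 : ℝ) ^ ((k : ℝ) * p))) k +
        ((if k = Int.log 2 (max |u x| |u y|) - 1 then ENNReal.ofReal (|u x - u y| ^ p) else 0) +
          (if k = Int.log 2 (max |u x| |u y|) then ENNReal.ofReal (|u x - u y| ^ p) else 0)) := by
  by_cases hkN : k ≤ Int.log 2 |u x - u y|
  · rw [indicator_of_mem (mem_Iic.2 hkN)]
    refine le_add_right (mul_le_of_le_one_right' ?_)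
    exact ENNReal.ofReal_le_one.2
      (Real.rpow_le_one (abs_nonneg _) (abs_truncLevel_sub_le_one u k x y) hp.le)
  by_cases hne : truncLevel u k x = truncLevel u k y
  · simp [hne, Real.zero_rpow hp.ne']
  have hδk : |u x - u y| < 2 ^ k := by
    exact_mod_cast (Int.lt_zpow_iff_log_lt one_lt_two hδ).2 (by omega)
  refine (ofReal_two_rpow_mul_truncLevel_sub_le u k x y hp.le).trans (le_add_left ?_)
  rcases eq_log_sub_one_or_eq_log_of_truncLevel_ne u hne hδk with h | h <;> simp [h]

end Truncation

lemma one_sub_two_rpow_neg_pos {p : ℝ} (hp : 0 < p) : 0 < 1 - (2 : ℝ) ^ (-p) :=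
  sub_pos.2 (Real.rpow_lt_one_of_one_lt_of_neg one_lt_two (neg_neg_of_pos hp))

lemma tsum_indicator_Iic_two_rpow {p : ℝ} (hp : 0 < p) (N : ℤ) :
    ∑' k : ℤ, (Iic N).indicator (fun k : ℤ => ENNReal.ofReal ((2 : ℝ) ^ ((k : ℝ) * p))) k =
      ENNReal.ofReal ((2 : ℝ) ^ ((N : ℝ) * p) * (1 - (2 : ℝ) ^ (-p))⁻¹) := by
  have hinj : Function.Injective fun j : ℕ => N - j := fun i j h => by simpa using h
  have hsupp : Function.support
      ((Iic N).indicator fun k : ℤ => ENNReal.ofReal ((2 : ℝ) ^ ((k : ℝ) * p))) ⊆ range fun j : ℕ => N - j := fun k hk => by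
    have : k ≤ N := by by_contra h; exact hk (indicator_of_notMem (mt mem_Iic.1 h) _)
    exact ⟨(N - k).toNat, show N - ((N - k).toNat : ℤ) = k by omega⟩
  have hterm : ∀ j : ℕ,
      (Iic N).indicator (fun k : ℤ => ENNReal.ofReal ((2 : ℝ) ^ ((k : ℝ) * p))) (N - j) =
        ENNReal.ofReal ((2 : ℝ) ^ ((N : ℝ) * p)) * ENNReal.ofReal ((2 : ℝ) ^ (-p)) ^ j := by
    intro j
    rw [indicator_of_mem (by simp), ← ENNReal.ofReal_pow (by positivity),
      ← ENNReal.ofReal_mul (by positivity), ← Real.rpow_natCast, ← Real.rpow_mul zero_le_two,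
      ← Real.rpow_add two_pos]
    push_cast
    ring_nf
  have hpos := one_sub_two_rpow_neg_pos hp
  rw [← hinj.tsum_eq hsupp]
  simp only [hterm]
  rw [ENNReal.tsum_mul_left, ENNReal.tsum_geometric, ← ENNReal.ofReal_one,
    ← ENNReal.ofReal_sub _ (by positivity), ← ENNReal.ofReal_inv_of_pos hpos,
    ← ENNReal.ofReal_mul (by positivity)]

theorem tsum_ofReal_two_rpow_mul_truncLevel_sub_le {X : Type*} {p : ℝ} (hp : 0 < p)
    (u : X → ℝ) (x y : X) :
    ∑' k : ℤ, ENNReal.ofReal ((2 : ℝ) ^ ((k : ℝ) * p)) *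
        ENNReal.ofReal (|truncLevel u k x - truncLevel u k y| ^ p) ≤
      ENNReal.ofReal ((1 - (2 : ℝ) ^ (-p))⁻¹ + 2) * ENNReal.ofReal (|u x - u y| ^ p) := by
  rcases (abs_nonneg (u x - u y)).eq_or_lt with hδ | hδ
  · have hzero : ∀ k : ℤ, ENNReal.ofReal ((2 : ℝ) ^ ((k : ℝ) * p)) *
        ENNReal.ofReal (|truncLevel u k x - truncLevel u k y| ^ p) = 0 := fun k =>
      nonpos_iff_eq_zero.1 <| (ofReal_two_rpow_mul_truncLevel_sub_le u k x y hp.le).trans_eq <| by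
        rw [← hδ, Real.zero_rpow hp.ne', ENNReal.ofReal_zero]
    simp [hzero]
  set N := Int.log 2 |u x - u y|
  set c := ENNReal.ofReal (|u x - u y| ^ p)
  have hN : (2 : ℝ) ^ ((N : ℝ) * p) ≤ |u x - u y| ^ p := by
    rw [Real.rpow_mul zero_le_two, Real.rpow_intCast]
    gcongr
    exact_mod_cast Int.zpow_log_le_self one_lt_two hδ
  have hinv : 0 ≤ (1 - (2 : ℝ) ^ (-p))⁻¹ := (inv_pos.2 (one_sub_two_rpow_neg_pos hp)).le
  calc _ ≤ _ := ENNReal.tsum_le_tsum fun k =>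
          ofReal_two_rpow_mul_truncLevel_sub_le_indicator_add u k x y hp hδ
    _ = ENNReal.ofReal ((2 : ℝ) ^ ((N : ℝ) * p) * (1 - (2 : ℝ) ^ (-p))⁻¹) + (c + c) := by
        rw [ENNReal.tsum_add, ENNReal.tsum_add, tsum_indicator_Iic_two_rpow hp, tsum_ite_eq,
          tsum_ite_eq]
    _ ≤ ENNReal.ofReal (|u x - u y| ^ p * (1 - (2 : ℝ) ^ (-p))⁻¹) + (c + c) := by gcongr
    _ = _ := by
        rw [ENNReal.ofReal_mul (by positivity), ENNReal.ofReal_add hinv zero_le_two,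
          ENNReal.ofReal_ofNat]
        ring

lemma tsum_mul_fracKernel_le {X ι : Type*} [MetricSpace X] [MeasurableSpace X] (μ : Measure X)
    (s p : ℝ) {v : ι → X → ℝ} {u : X → ℝ} {w : ι → ℝ≥0∞} {c : ℝ≥0∞} {x y : X}
    (h : ∑' i, w i * ENNReal.ofReal (|v i x - v i y| ^ p) ≤ c * ENNReal.ofReal (|u x - u y| ^ p)) :
    ∑' i, w i * fracKernel μ s p (v i) x y ≤ c * fracKernel μ s p u x y := by
  simp only [fracKernel, div_eq_mul_inv, ← mul_assoc]
  rw [ENNReal.tsum_mul_right]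
  exact mul_le_mul_left h _

lemma tsum_lintegral_le_lintegral_tsum {α ι : Type*} [MeasurableSpace α] [Countable ι]
    (μ : Measure α) (f : ι → α → ℝ≥0∞) :
    ∑' i, ∫⁻ a, f i a ∂μ ≤ ∫⁻ a, ∑' i, f i a ∂μ := by
  choose g hg_meas hg_le hg_eq using fun i => exists_measurable_le_lintegral_eq μ (f i)
  calc ∑' i, ∫⁻ a, f i a ∂μ = ∑' i, ∫⁻ a, g i a ∂μ := by simp only [hg_eq]
    _ = ∫⁻ a, ∑' i, g i a ∂μ := (lintegral_tsum fun i => (hg_meas i).aemeasurable).symm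
    _ ≤ ∫⁻ a, ∑' i, f i a ∂μ := lintegral_mono fun a => ENNReal.tsum_le_tsum fun i => hg_le i a

lemma tsum_mul_lintegral_le_of_forall {α ι : Type*} [MeasurableSpace α] [Countable ι]
    {μ : Measure α} {w : ι → ℝ≥0∞} {c : ℝ≥0∞} (hc : c ≠ ∞) {F : ι → α → ℝ≥0∞} {G : α → ℝ≥0∞}
    (h : ∀ a, ∑' i, w i * F i a ≤ c * G a) :
    ∑' i, w i * ∫⁻ a, F i a ∂μ ≤ c * ∫⁻ a, G a ∂μ :=
  calc ∑' i, w i * ∫⁻ a, F i a ∂μ ≤ ∑' i, ∫⁻ a, w i * F i a ∂μ :=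
        ENNReal.tsum_le_tsum fun _ => lintegral_const_mul_le _ _
    _ ≤ ∫⁻ a, ∑' i, w i * F i a ∂μ := tsum_lintegral_le_lintegral_tsum μ _
    _ ≤ ∫⁻ a, c * G a ∂μ := lintegral_mono h
    _ = c * ∫⁻ a, G a ∂μ := lintegral_const_mul' _ _ hc

theorem mazya_truncation_general {X : Type*} [MetricSpace X] [MeasurableSpace X]
    (μ : Measure X)
    (p s : ℝ) (hp : 1 ≤ p)
    (u : X → ℝ) :
    ∃ C : ℝ, 0 < C ∧
      ∀ (z : X) (R : ℝ), 0 < R →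
        (∑' k : ℤ, ENNReal.ofReal ((2 : ℝ) ^ ((k : ℝ) * p)) *
            ∫⁻ x in ball z R, ∫⁻ y in ball z R, fracKernel μ s p (truncLevel u k) x y ∂μ ∂μ) ≤
          ENNReal.ofReal C *
            ∫⁻ x in ball z R, ∫⁻ y in ball z R, fracKernel μ s p u x y ∂μ ∂μ := by
  have hp0 : 0 < p := one_pos.trans_le hp
  have hpos := one_sub_two_rpow_neg_pos hp0
  refine ⟨(1 - (2 : ℝ) ^ (-p))⁻¹ + 2, by positivity, fun z R _ => ?_⟩
  refine tsum_mul_lintegral_le_of_forall ENNReal.ofReal_ne_top fun x => ?_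
  refine tsum_mul_lintegral_le_of_forall ENNReal.ofReal_ne_top fun y => ?_
  exact tsum_mul_fracKernel_le μ s p (tsum_ofReal_two_rpow_mul_truncLevel_sub_le hp0 u x y)

/-- Fractional Maz'ya truncation estimate: the weighted sum over `k ∈ ℤ` of the Gagliardo
energies of the truncations `u_k` is controlled by the Gagliardo energy of `u`, with a
constant depending only on `p`. -/
theorem mazya_truncation {X : Type*} [MetricSpace X] [MeasurableSpace X] [BorelSpace X]
    [Nontrivial X]
    (μ : Measure X) (c_μ : ℝ) (hc : 1 < c_μ)
    (hball : ∀ (x : X) (ρ : ℝ), 0 < ρ → 0 < μ (ball x ρ) ∧ μ (ball x ρ) < ⊤)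
    (hdoubling : ∀ (x : X) (ρ : ℝ), 0 < ρ →
      μ (ball x (2 * ρ)) ≤ ENNReal.ofReal c_μ * μ (ball x ρ))
    (p s : ℝ) (hp : 1 ≤ p) (hs0 : 0 < s) (hs1 : s < 1)
    (u : X → ℝ) (hu : ∃ L : ℝ≥0, LipschitzWith L u) :
    ∃ C : ℝ, 0 < C ∧
      ∀ (z : X) (R : ℝ), 0 < R →
        (∑' k : ℤ, ENNReal.ofReal ((2 : ℝ) ^ ((k : ℝ) * p)) *
            ∫⁻ x in ball z R, ∫⁻ y in ball z R, fracKernel μ s p (truncLevel u k) x y ∂μ ∂μ) ≤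
          ENNReal.ofReal C *
            ∫⁻ x in ball z R, ∫⁻ y in ball z R, fracKernel μ s p u x y ∂μ ∂μ :=
  mazya_truncation_general μ p s hp u
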